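/- Let X be a real m×n matrix with singular value decomposition, and let P_k = Σ_{i=1}^k v_i ⊗ v_i be the orthogonal projection onto the span of the first k left singular vectors of X. Then for every real m×m matrix P of rank at most k, ‖X − P_k X‖_F ≤ ‖X − P X‖_F (Eckart–Young theorem in Frobenius norm for projections). -/

import Mathlib

open Matrix Finset

noncomputable def frobNorm {m n : Type*} [Fintype m] [Fintype n]
    (X : Matrix m n ℝ) : ℝ := Real.sqrt (∑ i, ∑ j, (X i j) ^ 2)

/-! Write `X = U S Wᵀ` and `τ i = σ i ^ 2` (zero for `i ≥ n`). For every `B`, `‖X - B X‖²` is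
the `τ`-weighted sum of the squared lengths `‖u i - B u i‖²`, where the columns `u i` of `U` are
orthonormal. For `B = P_k` this is the tail sum `∑_{i ≥ k} τ i`. For `P` of rank `≤ k`, let
`c i = ‖π (u i)‖²` with `π` the orthogonal projection onto the range of `P`: then
`‖u i - P u i‖² ≥ 1 - c i`, `0 ≤ c i ≤ 1`, and by Bessel's inequality `∑ c i ≤ rank P ≤ k`. As `τ`
is nonincreasing, `∑ τ i (1 - c i)` is smallest when the mass of `c` sits on the first `k` indices,
where it is again the tail sum. -/

open scoped RealInnerProductSpace
open WithLp (toLp)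

theorem sum_filter_le_sum_one_sub_mul_of_antitone {m k : ℕ} {τ c : Fin m → ℝ}
    (hτ : Antitone τ) (hτ0 : ∀ i, 0 ≤ τ i) (hc0 : ∀ i, 0 ≤ c i) (hc1 : ∀ i, c i ≤ 1)
    (hc : ∑ i, c i ≤ k) :
    ∑ i ∈ univ.filter (fun i : Fin m => k ≤ (i : ℕ)), τ i ≤ ∑ i, (1 - c i) * τ i := by
  by_cases hk : k < m
  swap
  · rw [Finset.sum_eq_zero fun i hi => absurd (i.isLt.trans_le (not_lt.mp hk))
      (not_lt.mpr (Finset.mem_filter.mp hi).2)]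
    exact Finset.sum_nonneg fun i _ => mul_nonneg (sub_nonneg.mpr (hc1 i)) (hτ0 i)
  -- With the threshold `t = τ k`, every `([i < k] - c i) * (τ i - t)` is nonnegative.
  set t := τ ⟨k, hk⟩
  have hterm (i : Fin m) : ((if (i : ℕ) < k then 1 else 0) - c i) * t ≤
      (1 - c i) * τ i - if k ≤ (i : ℕ) then τ i else 0 := by
    by_cases hi : (i : ℕ) < k
    · have : t ≤ τ i := hτ (Fin.mk_le_mk.mpr hi.le)
      rw [if_pos hi, if_neg (not_le.mpr hi)]
      nlinarith [hc1 i]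
    · have : τ i ≤ t := hτ (Fin.mk_le_mk.mpr (not_lt.mp hi))
      rw [if_neg hi, if_pos (not_lt.mp hi)]
      nlinarith [hc0 i]
  have hcount : ∑ i : Fin m, (if (i : ℕ) < k then (1 : ℝ) else 0) = k := by
    simp [Finset.sum_boole, Fin.card_filter_val_lt, hk.le]
  have hmass : 0 ≤ ∑ i : Fin m, ((if (i : ℕ) < k then 1 else 0) - c i) * t := by
    rw [← Finset.sum_mul, Finset.sum_sub_distrib, hcount]
    exact mul_nonneg (sub_nonneg.mpr hc) (hτ0 _)
  have hsum := hmass.trans (Finset.sum_le_sum fun i _ => hterm i)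
  rw [Finset.sum_sub_distrib, ← Finset.sum_filter] at hsum
  linarith

section InnerProductSpace

variable {E : Type*} [NormedAddCommGroup E] [InnerProductSpace ℝ E]

theorem Submodule.norm_sq_sub_norm_sq_starProjection_le (V : Submodule ℝ E)
    [V.HasOrthogonalProjection] (x : E) {w : E} (hw : w ∈ V) :
    ‖x‖ ^ 2 - ‖V.starProjection x‖ ^ 2 ≤ ‖x - w‖ ^ 2 := by
  have hmin : ‖x - V.starProjection x‖ ≤ ‖x - w‖ := by
    rw [V.starProjection_minimal]
    exact ciInf_le ⟨0, Set.forall_mem_range.mpr fun _ => norm_nonneg _⟩ (⟨w, hw⟩ : V)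
  have hpyth := V.norm_sq_eq_add_norm_sq_starProjection x
  rw [V.starProjection_orthogonal', _root_.sub_apply, one_apply_eq_self] at hpyth
  nlinarith [norm_nonneg (x - V.starProjection x)]

theorem Orthonormal.sum_norm_sq_starProjection_le_finrank {ι : Type*} [Fintype ι] {u : ι → E}
    (hu : Orthonormal ℝ u) (V : Submodule ℝ E) [FiniteDimensional ℝ V] :
    ∑ i, ‖V.starProjection (u i)‖ ^ 2 ≤ Module.finrank ℝ V := by
  let b := stdOrthonormalBasis ℝ V
  have hproj (x : E) : ‖V.starProjection x‖ ^ 2 = ∑ a, ⟪(b a : E), x⟫ ^ 2 := by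
    rw [V.starProjection_apply, Submodule.norm_coe, ← b.sum_sq_inner_right]
    simp only [Submodule.inner_orthogonalProjectionOnto_eq_of_mem_left]
  calc ∑ i, ‖V.starProjection (u i)‖ ^ 2 = ∑ a, ∑ i, ⟪u i, (b a : E)⟫ ^ 2 := by
        simp only [hproj, real_inner_comm (b _ : E)]
        exact Finset.sum_comm
    _ ≤ ∑ _a, (1 : ℝ) := by
        refine Finset.sum_le_sum fun a _ => ?_
        have hb : ‖(b a : E)‖ = 1 := by rw [Submodule.norm_coe, b.orthonormal.1 a]
        simpa [Real.norm_eq_abs, sq_abs, hb] using hu.sum_inner_products_le (s := univ) (b a : E)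
    _ = Module.finrank ℝ V := by simp

theorem Orthonormal.sum_filter_le_sum_mul_norm_sub_sq {m k : ℕ} {u : Fin m → E}
    (hu : Orthonormal ℝ u) {τ : Fin m → ℝ} (hτ : Antitone τ) (hτ0 : ∀ i, 0 ≤ τ i)
    {V : Submodule ℝ E} [FiniteDimensional ℝ V] (hV : Module.finrank ℝ V ≤ k)
    {w : Fin m → E} (hw : ∀ i, w i ∈ V) :
    ∑ i ∈ univ.filter (fun i : Fin m => k ≤ (i : ℕ)), τ i ≤ ∑ i, τ i * ‖u i - w i‖ ^ 2 := by
  set c := fun i => ‖V.starProjection (u i)‖ ^ 2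
  have hc1 (i : Fin m) : c i ≤ 1 := by
    have hle := V.norm_starProjection_apply_le (u i)
    rw [hu.1 i] at hle
    exact pow_le_one₀ (norm_nonneg _) hle
  have hc : ∑ i, c i ≤ k :=
    (hu.sum_norm_sq_starProjection_le_finrank V).trans (by exact_mod_cast hV)
  calc _ ≤ ∑ i, (1 - c i) * τ i :=
        sum_filter_le_sum_one_sub_mul_of_antitone hτ hτ0 (fun _ => by positivity) hc1 hc
    _ ≤ ∑ i, τ i * ‖u i - w i‖ ^ 2 := by
        refine Finset.sum_le_sum fun i _ => ?_
        rw [mul_comm]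
        refine mul_le_mul_of_nonneg_left ?_ (hτ0 i)
        simpa [hu.1 i] using V.norm_sq_sub_norm_sq_starProjection_le (u i) (hw i)

end InnerProductSpace

namespace Matrix

variable {l m n o : Type*}

theorem sum_sq_eq_trace_mul_transpose [Fintype m] [Fintype n] (A : Matrix m n ℝ) :
    ∑ i, ∑ j, A i j ^ 2 = (A * Aᵀ).trace := by
  simp [trace, mul_apply, sq]

theorem trace_mul_diagonal_mul_transpose [Fintype m] [Fintype n] [DecidableEq n]
    (A : Matrix m n ℝ) (d : n → ℝ) :
    (A * diagonal d * Aᵀ).trace = ∑ j, d j * ∑ i, A i j ^ 2 := by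
  simp only [trace, diag, mul_apply (M := A * diagonal d), mul_diagonal, transpose_apply,
    Finset.mul_sum]
  rw [Finset.sum_comm]
  exact Finset.sum_congr rfl fun _ _ => Finset.sum_congr rfl fun _ _ => by ring

theorem sum_sq_mul_mul_mul_transpose [Fintype l] [Fintype n] [DecidableEq n] [Fintype m]
    [Fintype o] [DecidableEq o] (B : Matrix l m ℝ) (U : Matrix m o ℝ)
    {S : Matrix o n ℝ} {W : Matrix n n ℝ} {τ : o → ℝ} (hW : Wᵀ * W = 1)
    (hS : S * Sᵀ = diagonal τ) :
    ∑ a, ∑ j, ((B * (U * S * Wᵀ)) a j) ^ 2 = ∑ i, τ i * ∑ a, ((B * U) a i) ^ 2 := by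
  rw [sum_sq_eq_trace_mul_transpose, ← trace_mul_diagonal_mul_transpose, ← hS]
  congr 1
  simp only [transpose_mul, transpose_transpose, Matrix.mul_assoc]
  rw [← Matrix.mul_assoc Wᵀ W, hW, Matrix.one_mul]

theorem orthonormal_toLp_transpose [Fintype m] [DecidableEq n] {U : Matrix m n ℝ}
    (hU : Uᵀ * U = 1) : Orthonormal ℝ fun j => toLp 2 (Uᵀ j) := by
  rw [orthonormal_iff_ite]
  intro i j
  rw [EuclideanSpace.inner_toLp_toLp, ← one_apply, ← hU]
  simp [mul_apply, dotProduct, mul_comm]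

theorem sum_sq_mul_apply_eq_norm_sq [Fintype l] [Fintype m] [DecidableEq m]
    (A : Matrix l m ℝ) (U : Matrix m n ℝ) (j : n) :
    ∑ a, ((A * U) a j) ^ 2 = ‖toLpLin 2 2 A (toLp 2 (Uᵀ j))‖ ^ 2 := by
  rw [EuclideanSpace.real_norm_sq_eq]
  simp [mul_apply, mulVec, dotProduct]

theorem finrank_range_toLpLin {R : Type*} [Fintype m] [Fintype n] [DecidableEq n] [Field R]
    (p q : ENNReal) (A : Matrix m n R) :
    Module.finrank R (LinearMap.range (toLpLin p q A)) = A.rank := by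
  rw [toLpLin_eq_toLin, ← rank_eq_finrank_range_toLin]

theorem sum_vecMulVec_col_mul_apply [Fintype m] [DecidableEq o] {U : Matrix m o ℝ}
    (hU : Uᵀ * U = 1) (s : Finset o) (a : m) (j : o) :
    ((∑ i ∈ s, vecMulVec (fun b => U b i) (fun b => U b i)) * U) a j =
      if j ∈ s then U a j else 0 := by
  have hcol (i : o) : ∑ b, U b i * U b j = (1 : Matrix o o ℝ) i j := by
    rw [← hU]
    simp [mul_apply]
  simp only [mul_apply, sum_apply, vecMulVec_apply, Finset.sum_mul]
  rw [Finset.sum_comm]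
  simp_rw [mul_assoc, ← Finset.mul_sum, hcol, one_apply, mul_ite, mul_one, mul_zero,
    Finset.sum_ite_eq']

theorem sum_sq_one_sub_sum_vecMulVec_col_mul_apply [Fintype m] [DecidableEq m]
    {U : Matrix m m ℝ} (hU : Uᵀ * U = 1) (s : Finset m) (j : m) :
    ∑ a, (((1 - ∑ i ∈ s, vecMulVec (fun b => U b i) (fun b => U b i)) * U) a j) ^ 2 =
      if j ∈ s then 0 else 1 := by
  simp only [Matrix.sub_mul, Matrix.one_mul, sub_apply, sum_vecMulVec_col_mul_apply hU]
  split_ifs with hj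
  · simp
  · have hnorm := congrFun (congrFun hU j) j
    simpa [mul_apply, sq] using hnorm

end Matrix

def rectDiagonal (m n : ℕ) (σ : ℕ → ℝ) : Matrix (Fin m) (Fin n) ℝ :=
  of fun i j => if (i : ℕ) = j then σ i else 0

theorem rectDiagonal_mul_transpose (m n : ℕ) (σ : ℕ → ℝ) :
    rectDiagonal m n σ * (rectDiagonal m n σ)ᵀ =
      diagonal fun i : Fin m => if (i : ℕ) < n then σ i ^ 2 else 0 := by
  ext i i'
  simp only [mul_apply, transpose_apply, rectDiagonal, of_apply, diagonal_apply]
  rw [Fin.sum_univ_eq_sum_range (fun j => (if (i : ℕ) = j then σ i else 0) *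
    (if (i' : ℕ) = j then σ i' else 0))]
  simp only [ite_mul, zero_mul, Finset.sum_ite_eq, Finset.mem_range]
  by_cases h : i = i'
  · subst h
    simp [sq]
  · simp [h, Fin.val_ne_of_ne (Ne.symm h)]

/-- Eckart–Young theorem in Frobenius norm for projections: the projection onto the
first `k` left singular vectors achieves the best Frobenius-norm approximation of `X`
among all `m × m` matrices `P` of rank at most `k`. -/
theorem eckart_young_frobenius {m n : ℕ}
    (X : Matrix (Fin m) (Fin n) ℝ)
    (U : Matrix (Fin m) (Fin m) ℝ) (W : Matrix (Fin n) (Fin n) ℝ) (σ : ℕ → ℝ)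
    (hU : Uᵀ * U = 1) (hW : Wᵀ * W = 1)
    (hσnn : ∀ j, 0 ≤ σ j) (hσanti : ∀ j l, j ≤ l → σ l ≤ σ j)
    (hSVD : X = U * (Matrix.of fun (i : Fin m) (j : Fin n) =>
        if (i : ℕ) = (j : ℕ) then σ (i : ℕ) else 0) * Wᵀ)
    (k : ℕ) (Pk : Matrix (Fin m) (Fin m) ℝ)
    (hPk : Pk = ∑ l ∈ Finset.univ.filter (fun l : Fin m => (l : ℕ) < k),
        Matrix.vecMulVec (fun i => U i l) (fun j => U j l)) :
    ∀ P : Matrix (Fin m) (Fin m) ℝ, P.rank ≤ k →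
      frobNorm (X - Pk * X) ≤ frobNorm (X - P * X) := by
  intro P hP
  set τ : Fin m → ℝ := fun i => if (i : ℕ) < n then σ i ^ 2 else 0
  have hτ0 (i : Fin m) : 0 ≤ τ i := by dsimp only [τ]; split_ifs <;> positivity
  have hτ : Antitone τ := by
    intro i j hij
    dsimp only [τ]
    split_ifs with hj hi hi
    · exact pow_le_pow_left₀ (hσnn j) (hσanti i j hij) 2
    · exact absurd ((Fin.le_def.mp hij).trans_lt hj) hi
    · positivity
    · rfl
  have hX : X = U * rectDiagonal m n σ * Wᵀ := hSVD
  have herr (B : Matrix (Fin m) (Fin m) ℝ) :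
      frobNorm (X - B * X) = √(∑ i, τ i * ∑ a, (((1 - B) * U) a i) ^ 2) := by
    rw [frobNorm, ← sum_sq_mul_mul_mul_transpose _ _ hW (rectDiagonal_mul_transpose m n σ), ← hX,
      Matrix.sub_mul, Matrix.one_mul]
  rw [herr, herr]
  refine Real.sqrt_le_sqrt ?_
  let T := toLpLin 2 2 P
  calc ∑ i, τ i * ∑ a, (((1 - Pk) * U) a i) ^ 2
      = ∑ i ∈ univ.filter (fun i : Fin m => k ≤ (i : ℕ)), τ i := by
        simp_rw [hPk, sum_sq_one_sub_sum_vecMulVec_col_mul_apply hU, Finset.sum_filter,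
          Finset.mem_filter, Finset.mem_univ, true_and, mul_ite, mul_zero, mul_one, ← not_lt,
          ite_not]
    _ ≤ ∑ i, τ i * ‖toLp 2 (Uᵀ i) - T (toLp 2 (Uᵀ i))‖ ^ 2 :=
        (orthonormal_toLp_transpose hU).sum_filter_le_sum_mul_norm_sub_sq hτ hτ0
          ((finrank_range_toLpLin 2 2 P).trans_le hP) fun i => LinearMap.mem_range_self T _
    _ = ∑ i, τ i * ∑ a, (((1 - P) * U) a i) ^ 2 := by
        simp_rw [sum_sq_mul_apply_eq_norm_sq, map_sub, toLpLin_one, T, LinearMap.sub_apply,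
          LinearMap.id_apply]
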